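/- arXiv:2111.01034 — 4 statements merged into one kernel-verified Lean document; each statement's English description precedes it below -/
import Mathlib

section
/- Let E be a finite-dimensional real vector space, Γ a group acting on E by linear automorphisms, and F ⊆ E a linear subspace that is fixed pointwise by every element of Γ. If ξ ∈ E is such that the orbit Γξ is an open subset of E, then F + Γξ = Γξ. -/
open Pointwise

/-- If a group `G` acts on a finite-dimensional real vector space `E` by linear
automorphisms, `F ⊆ E` is a subspace fixed pointwise by every element of `G`, and the
orbit `Gξ` of some `ξ ∈ E` is open, then `F + Gξ = Gξ`. -/
theorem statement3 {E : Type*} [NormedAddCommGroup E] [NormedSpace ℝ E]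
    [FiniteDimensional ℝ E] {G : Type*} [Group G] [MulAction G E]
    (hlin : ∀ γ : G, IsLinearMap ℝ (fun v : E => γ • v))
    (F : Submodule ℝ E) (hF : ∀ (γ : G), ∀ v ∈ F, γ • v = v)
    (ξ : E) (hopen : IsOpen (MulAction.orbit G ξ)) :
    (F : Set E) + MulAction.orbit G ξ = MulAction.orbit G ξ := by
  apply Set.Subset.antisymm
  · rintro x ⟨σ, hσ, η, hη, rfl⟩
    obtain ⟨ε, hε, hball⟩ := Metric.isOpen_iff.mp hopen ξ (MulAction.mem_orbit_self ξ)
    obtain ⟨n, hn⟩ := exists_nat_gt (‖σ‖ / ε)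
    have hn0 : 0 < (n : ℝ) := lt_of_le_of_lt (div_nonneg (norm_nonneg _) hε.le) hn
    have hsmall : ‖(n : ℝ)⁻¹ • σ‖ < ε := by
      rw [norm_smul, norm_inv, Real.norm_natCast, inv_mul_lt_iff₀ hn0]
      rw [div_lt_iff₀ hε] at hn
      linarith
    have step : ∀ y ∈ MulAction.orbit G ξ,
        y + (n : ℝ)⁻¹ • σ ∈ MulAction.orbit G ξ := by
      rintro y ⟨γ, rfl⟩
      have h1 : ξ + (n : ℝ)⁻¹ • σ ∈ MulAction.orbit G ξ := by
        apply hball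
        simp [Metric.mem_ball, dist_eq_norm]; exact hsmall
      obtain ⟨δ, hδ⟩ := h1
      refine ⟨γ * δ, ?_⟩
      change δ • ξ = ξ + (n : ℝ)⁻¹ • σ at hδ
      show (γ * δ) • ξ = γ • ξ + (n : ℝ)⁻¹ • σ
      rw [mul_smul, hδ, (hlin γ).map_add, (hlin γ).map_smul, hF γ σ hσ]
    have key : ∀ k : ℕ, ∀ y ∈ MulAction.orbit G ξ,
        y + (k : ℝ) • ((n : ℝ)⁻¹ • σ) ∈ MulAction.orbit G ξ := by
      intro k
      induction k with
      | zero => simpa using fun y hy => hy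
      | succ k ih =>
        intro y hy
        have h2 := step _ (ih y hy)
        have : y + ((k : ℝ) + 1) • ((n : ℝ)⁻¹ • σ)
            = y + (k : ℝ) • ((n : ℝ)⁻¹ • σ) + (n : ℝ)⁻¹ • σ := by
          rw [add_smul, one_smul]; abel
        push_cast
        rw [this]
        exact h2
    have hfin := key n η hη
    rw [smul_smul, mul_inv_cancel₀ hn0.ne', one_smul, add_comm] at hfin
    exact hfin
  · intro x hx
    exact ⟨0, F.zero_mem, x, hx, zero_add x⟩
end

section
/- Let g be a finite-dimensional real Lie algebra and k ⊆ g an ideal with [k,k] = [g,g]. For x ∈ g let e_x := exp((ad x)|_k) ∈ GL(k) (well defined since ad x preserves the ideal k), and let Γ be the subgroup of GL(k*) generated by the maps μ ↦ μ ∘ e_x⁻¹ for x ∈ g. If ξ ∈ k* is such that the orbit Γξ is open in k*, then [k,k]^⊥ + Γξ = Γξ, where [k,k]^⊥ is the annihilator of [k,k] in k*. (This is the Lie-algebraic form of the paper's lemma: if H is a connected Lie group with a closed connected subgroup K satisfying [k,k] = [h,h], ξ ∈ k*, and the H-orbit Hξ ⊆ k* is open, then [k,k]^⊥ + Hξ =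 Hξ.) -/
open Pointwise

/-- The exponential of a linear endomorphism of a finite-dimensional real vector
space, computed via the matrix exponential in any basis. -/
noncomputable def expEnd {V : Type*} [AddCommGroup V] [Module ℝ V] [FiniteDimensional ℝ V]
    (f : Module.End ℝ V) : Module.End ℝ V :=
  Matrix.toLin (Module.finBasis ℝ V) (Module.finBasis ℝ V)
    (NormedSpace.exp (LinearMap.toMatrix (Module.finBasis ℝ V) (Module.finBasis ℝ V) f))

/-- The restriction `(ad x)|_k : k → k` of `ad x` to an ideal `k ⊆ g`. -/
def adRestrict {g : Type*} [LieRing g] [LieAlgebra ℝ g] (k : LieIdeal ℝ g) (x : g) :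
    Module.End ℝ ↥k.toSubmodule :=
  LinearMap.restrict (LieAlgebra.ad ℝ g x) (fun v hv => by
    rw [LieAlgebra.ad_apply]
    exact k.lie_mem hv)

/-- The subgroup `Γ` of `GL(k*)` generated by the maps `μ ↦ μ ∘ (e_x)⁻¹`, where
`e_x := exp ((ad x)|_k)` for `x ∈ g`; note `(e_x)⁻¹ = exp (-(ad x)|_k)`. -/
noncomputable def coadGamma {g : Type*} [LieRing g] [LieAlgebra ℝ g] [FiniteDimensional ℝ g]
    (k : LieIdeal ℝ g) :
    Subgroup (Module.Dual ℝ ↥k.toSubmodule ≃ₗ[ℝ] Module.Dual ℝ ↥k.toSubmodule) :=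
  Subgroup.closure {γ | ∃ x : g, ∀ μ : Module.Dual ℝ ↥k.toSubmodule,
    γ μ = μ ∘ₗ expEnd (-(adRestrict k x))}

/-!
Every generator `μ ↦ μ ∘ exp(-(ad x)|_k)` of `Γ` fixes `[k,k]^⊥` pointwise: `ad x` maps `k` into
`[g,g] = [k,k]`, so all terms of the exponential series but the first vanish against an element
of `[k,k]^⊥`. Hence `Γ` commutes with translations by `[k,k]^⊥`, and translating an open orbit
gives an open orbit. Along a line `t ↦ ξ + t α` with `α ∈ [k,k]^⊥` the orbit is therefore locally
constant, hence constant by connectedness of `ℝ`.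
-/

open NormedSpace MulAction

theorem comp_expEnd_of_comp_eq_zero {V : Type*} [AddCommGroup V] [Module ℝ V]
    [FiniteDimensional ℝ V] {α : Module.Dual ℝ V} {f : Module.End ℝ V} (hf : α ∘ₗ f = 0) :
    α ∘ₗ expEnd f = α := by
  -- a norm only to sum the exponential series; it induces the product topology used by `exp`
  let _ := Matrix.linftyOpNormedRing (n := Fin (Module.finrank ℝ V)) (α := ℝ)
  let _ := Matrix.linftyOpNormedAlgebra (n := Fin (Module.finrank ℝ V)) (R := ℝ) (α := ℝ)
  ext v
  set b := Module.finBasis ℝ V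
  set M := LinearMap.toMatrix b b f
  let Φ : Matrix (Fin (Module.finrank ℝ V)) (Fin (Module.finrank ℝ V)) ℝ →L[ℝ] ℝ :=
    LinearMap.toContinuousLinearMap (α ∘ₗ LinearMap.applyₗ v ∘ₗ (Matrix.toLin b b).toLinearMap)
  have hterm : ∀ n : ℕ, Φ ((Nat.factorial n : ℝ)⁻¹ • M ^ n) = if n = 0 then α v else 0 := by
    rintro (_ | n)
    · simp [Φ]
    · have hvanish : α ((f ^ (n + 1)) v) = 0 := by
        rw [pow_succ', Module.End.mul_apply]
        exact LinearMap.congr_fun hf _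
      simp [Φ, M, Matrix.toLin_pow, hvanish]
  have hsum := (exp_series_hasSum_exp' (𝕂 := ℝ) M).mapL Φ
  simp only [hterm] at hsum
  exact hsum.unique (hasSum_ite_eq 0 (α v))

section CoadjointAction

variable {g : Type*} [LieRing g] [LieAlgebra ℝ g] (k : LieIdeal ℝ g)

theorem comp_adRestrict_eq_zero
    (hkk : (⁅k, k⁆ : LieIdeal ℝ g) = ⁅(⊤ : LieIdeal ℝ g), (⊤ : LieIdeal ℝ g)⁆) (x : g)
    {α : Module.Dual ℝ ↥k.toSubmodule}
    (hα : α ∈ (Submodule.comap k.toSubmodule.subtype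
      (⁅k, k⁆ : LieIdeal ℝ g).toSubmodule).dualAnnihilator) :
    α ∘ₗ adRestrict k x = 0 := by
  ext w
  refine (Submodule.mem_dualAnnihilator α).1 hα _ ?_
  change ⁅x, (w : g)⁆ ∈ (⁅k, k⁆ : LieIdeal ℝ g)
  rw [hkk]
  exact LieSubmodule.lie_mem_lie (LieSubmodule.mem_top x) (LieSubmodule.mem_top _)

theorem coadGamma_le_stabilizer [FiniteDimensional ℝ g]
    (hkk : (⁅k, k⁆ : LieIdeal ℝ g) = ⁅(⊤ : LieIdeal ℝ g), (⊤ : LieIdeal ℝ g)⁆)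
    {α : Module.Dual ℝ ↥k.toSubmodule}
    (hα : α ∈ (Submodule.comap k.toSubmodule.subtype
      (⁅k, k⁆ : LieIdeal ℝ g).toSubmodule).dualAnnihilator) :
    coadGamma k ≤ stabilizer _ α := by
  refine (Subgroup.closure_le _).2 ?_
  rintro γ ⟨x, hγ⟩
  rw [SetLike.mem_coe, mem_stabilizer_iff, LinearEquiv.smul_def, hγ]
  refine comp_expEnd_of_comp_eq_zero ?_
  rw [LinearMap.comp_neg, comp_adRestrict_eq_zero k hkk x hα, neg_zero]

end CoadjointAction

section OpenOrbit

variable {G V : Type*} [Group G] [AddCommGroup V] [DistribMulAction G V]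

theorem MulAction.orbit_add_of_forall_smul_eq (x : V) {w : V} (hw : ∀ g : G, g • w = w) :
    orbit G (x + w) = (· + w) '' orbit G x := by
  ext y
  simp only [Set.mem_image, mem_orbit_iff, exists_exists_eq_and, smul_add, hw]

variable [Module ℝ V] [TopologicalSpace V] [ContinuousAdd V] [ContinuousSMul ℝ V]

theorem add_mem_orbit_of_isOpen (W : Submodule ℝ V) (hW : ∀ g : G, ∀ w ∈ W, g • w = w)
    {ξ : V} (hopen : IsOpen (orbit G ξ)) {w : V} (hw : w ∈ W) :
    ξ + w ∈ orbit G ξ := by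
  have hloc : IsLocallyConstant fun t : ℝ => orbit G (ξ + t • w) := by
    refine (IsLocallyConstant.iff_exists_open _).2 fun t₀ => ?_
    refine ⟨(fun t : ℝ => ξ + t • w) ⁻¹' orbit G (ξ + t₀ • w), ?_, mem_orbit_self _,
      fun t ht => orbit_eq_iff.2 ht⟩
    rw [MulAction.orbit_add_of_forall_smul_eq ξ fun g => hW g _ (W.smul_mem t₀ hw)]
    exact (isOpenMap_add_right _ _ hopen).preimage (by fun_prop)
  simpa [orbit_eq_iff] using hloc.apply_eq_of_preconnectedSpace 1 0

theorem Submodule.coe_add_orbit_eq_of_isOpen (W : Submodule ℝ V)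
    (hW : ∀ g : G, ∀ w ∈ W, g • w = w) {ξ : V} (hopen : IsOpen (orbit G ξ)) :
    (W : Set V) + orbit G ξ = orbit G ξ := by
  refine subset_antisymm ?_ fun η hη => ⟨0, W.zero_mem, η, hη, zero_add η⟩
  rintro _ ⟨w, hw, _, ⟨g, rfl⟩, rfl⟩
  obtain ⟨h, hh : h • ξ = ξ + w⟩ := add_mem_orbit_of_isOpen W hW hopen hw
  refine ⟨g * h, ?_⟩
  change (g * h) • ξ = w + g • ξ
  rw [mul_smul, hh, smul_add, hW g w hw, add_comm]

end OpenOrbit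

theorem statement4_general {g : Type*} [LieRing g] [LieAlgebra ℝ g] [FiniteDimensional ℝ g]
    (k : LieIdeal ℝ g)
    [TopologicalSpace (Module.Dual ℝ ↥k.toSubmodule)]
    [IsTopologicalAddGroup (Module.Dual ℝ ↥k.toSubmodule)]
    [ContinuousSMul ℝ (Module.Dual ℝ ↥k.toSubmodule)]
    (hkk : (⁅k, k⁆ : LieIdeal ℝ g) = ⁅(⊤ : LieIdeal ℝ g), (⊤ : LieIdeal ℝ g)⁆)
    (ξ : Module.Dual ℝ ↥k.toSubmodule)
    (hopen : IsOpen {η | ∃ γ ∈ coadGamma k, η = γ ξ}) :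
    (↑(Submodule.dualAnnihilator
        (Submodule.comap k.toSubmodule.subtype (⁅k, k⁆ : LieIdeal ℝ g).toSubmodule)) : Set _)
        + {η | ∃ γ ∈ coadGamma k, η = γ ξ}
      = {η | ∃ γ ∈ coadGamma k, η = γ ξ} := by
  have horbit : {η | ∃ γ ∈ coadGamma k, η = γ ξ} = orbit (coadGamma k) ξ := by
    ext η
    constructor
    · rintro ⟨γ, hγ, rfl⟩
      exact ⟨⟨γ, hγ⟩, rfl⟩
    · rintro ⟨γ, rfl⟩
      exact ⟨γ, γ.2, rfl⟩
  rw [horbit] at hopen ⊢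
  exact Submodule.coe_add_orbit_eq_of_isOpen _
    (fun (γ : coadGamma k) _ hα => coadGamma_le_stabilizer k hkk hα γ.2) hopen

/-- If `k ⊆ g` is an ideal with `[k,k] = [g,g]` and the `Γ`-orbit of `ξ ∈ k*` is open in
`k*`, then `[k,k]^⊥ + Γξ = Γξ`, where `[k,k]^⊥` is the annihilator of `[k,k]` in `k*`.
(The dual `k*` carries its standard topology: any Hausdorff vector topology, which is
unique since `k*` is finite-dimensional.) -/
theorem statement4 {g : Type*} [LieRing g] [LieAlgebra ℝ g] [FiniteDimensional ℝ g]
    (k : LieIdeal ℝ g)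
    [TopologicalSpace (Module.Dual ℝ ↥k.toSubmodule)]
    [IsTopologicalAddGroup (Module.Dual ℝ ↥k.toSubmodule)]
    [ContinuousSMul ℝ (Module.Dual ℝ ↥k.toSubmodule)]
    [T2Space (Module.Dual ℝ ↥k.toSubmodule)]
    (hkk : (⁅k, k⁆ : LieIdeal ℝ g) = ⁅(⊤ : LieIdeal ℝ g), (⊤ : LieIdeal ℝ g)⁆)
    (ξ : Module.Dual ℝ ↥k.toSubmodule)
    (hopen : IsOpen {η | ∃ γ ∈ coadGamma k, η = γ ξ}) :
    (↑(Submodule.dualAnnihilator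
        (Submodule.comap k.toSubmodule.subtype (⁅k, k⁆ : LieIdeal ℝ g).toSubmodule)) : Set _)
        + {η | ∃ γ ∈ coadGamma k, η = γ ξ}
      = {η | ∃ γ ∈ coadGamma k, η = γ ξ} :=
  statement4_general k hkk ξ hopen
end

section
/- Assume conditions (a), (b), (c). Then for every p ∈ (ℂ^×)ⁿ (all coordinates nonzero), the orbit α(ℝ^k)p = {α(a)p : a ∈ ℝ^k} is dense in ℂⁿ and is not a locally closed subset of ℂⁿ. -/
/-- The orbit `α(ℝ^k)p = {α(a)p : a ∈ ℝ^k} ⊆ ℂⁿ`, where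
`α(a) = diag(e^{⟨η₁,a⟩+i⟨ξ₁,a⟩}, …, e^{⟨η_n,a⟩+i⟨ξ_n,a⟩})`. -/
noncomputable def alphaOrbit {n k : ℕ} (ξ η : Fin n → Fin k → ℝ) (p : Fin n → ℂ) :
    Set (Fin n → ℂ) :=
  {q | ∃ a : Fin k → ℝ, q = fun j =>
    Complex.exp (Complex.ofReal (∑ i, η j i * a i) +
      Complex.I * Complex.ofReal (∑ i, ξ j i * a i)) * p j}

/-- The map `Ψ(a) = (e^{i⟨ξ₁,a⟩}, …, e^{i⟨ξ_n,a⟩})`. -/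
noncomputable def psiMap {n k : ℕ} (ξ : Fin n → Fin k → ℝ) (a : Fin k → ℝ) : Fin n → ℂ :=
  fun j => Complex.exp (Complex.I * Complex.ofReal (∑ i, ξ j i * a i))

/-- The subspace `{η₁,…,η_n}^⊥ = {a ∈ ℝ^k : ⟨η_j, a⟩ = 0 for all j}`. -/
def perpSet {n k : ℕ} (η : Fin n → Fin k → ℝ) : Set (Fin k → ℝ) :=
  {a | ∀ j, ∑ i, η j i * a i = 0}

/-- The `n`-torus `𝕋ⁿ ⊆ ℂⁿ`. -/
def torusSet (n : ℕ) : Set (Fin n → ℂ) := {z | ∀ j, ‖z j‖ = 1}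

/-!
The orbit is the image, under the embedding `(ℂˣ)ⁿ ↪ ℂⁿ`, of a coset of the subgroup
`H = α(ℝ^k)` of the topological group `(ℂˣ)ⁿ`. This subgroup is dense: by linear independence
of the `η_j`, some `α(b)` has any prescribed moduli, and `Ψ(η^⊥) ⊆ H` is dense in the torus.
A dense locally closed subgroup is open, hence closed, hence everything; but `α(a)` lies on the
torus only for `a ∈ η^⊥`, so `H` misses the points of `𝕋ⁿ` outside `Ψ(η^⊥)`.
-/

open Topology Matrix

theorem IsLocallyClosed.isOpen_of_dense {X : Type*} [TopologicalSpace X] {s : Set X}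
    (hl : IsLocallyClosed s) (hd : Dense s) : IsOpen s := by
  rwa [isLocallyClosed_iff_isOpen_coborder, coborder, hd.closure_eq, ← Set.compl_eq_univ_sdiff,
    compl_compl] at hl

theorem Subgroup.eq_top_of_dense_of_isLocallyClosed {G : Type*} [Group G] [TopologicalSpace G]
    [IsTopologicalGroup G] {H : Subgroup G} (hd : Dense (H : Set G))
    (hl : IsLocallyClosed (H : Set G)) : H = ⊤ := by
  have hcl : IsClosed (H : Set G) := H.isClosed_of_isOpen (hl.isOpen_of_dense hd)
  rw [← SetLike.coe_set_eq, Subgroup.coe_top, ← hcl.closure_eq, hd.closure_eq]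

theorem Subgroup.dense_image_coset {G X : Type*} [Group G] [TopologicalSpace G]
    [IsTopologicalGroup G] [TopologicalSpace X] {ι : G → X} (hι : Continuous ι)
    (hdι : DenseRange ι) {H : Subgroup G} (hd : Dense (H : Set G)) (g : G) :
    Dense (ι '' ((· * g) '' H)) :=
  hdι.dense_image hι ((mul_right_surjective g).denseRange.dense_image (continuous_mul_const g) hd)

theorem Subgroup.not_isLocallyClosed_image_coset {G X : Type*} [Group G] [TopologicalSpace G]
    [IsTopologicalGroup G] [TopologicalSpace X] {ι : G → X} (hι : IsEmbedding ι)
    {H : Subgroup G} (hd : Dense (H : Set G)) (hne : H ≠ ⊤) (g : G) :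
    ¬ IsLocallyClosed (ι '' ((· * g) '' H)) := by
  intro hl
  have hcoset : IsLocallyClosed ((· * g) '' (H : Set G)) := by
    simpa only [Set.preimage_image_eq _ hι.injective] using hl.preimage hι.continuous
  refine hne (eq_top_of_dense_of_isLocallyClosed hd ?_)
  simpa only [Set.preimage_image_eq _ (mul_left_injective g)] using
    hcoset.preimage (continuous_mul_const g)

theorem Units.denseRange_val {G₀ : Type*} [GroupWithZero G₀] [TopologicalSpace G₀]
    [(𝓝[≠] (0 : G₀)).NeBot] : DenseRange (Units.val : G₀ˣ → G₀) :=
  (dense_compl_singleton 0).mono fun x hx => ⟨Units.mk0 x hx, rfl⟩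

theorem LinearIndependent.mulVec_surjective {m l R : Type*} [Field R] [Fintype m] [Fintype l]
    {M : Matrix m l R} (h : LinearIndependent R M.row) : Function.Surjective M.mulVec := by
  have hrank : Module.finrank R (LinearMap.range M.mulVecLin) = Module.finrank R (m → R) := by
    rw [← Matrix.rank, h.rank_matrix, Module.finrank_fintype_fun_eq_card]
  exact LinearMap.range_eq_top.mp (Submodule.eq_top_of_finrank_eq hrank)

noncomputable def alphaDiag {n k : ℕ} (ξ η : Fin n → Fin k → ℝ) :
    Multiplicative (Fin k → ℝ) →* (Fin n → ℂˣ) where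
  toFun a j := Units.mk0
    (Complex.exp ((η j ⬝ᵥ a.toAdd : ℝ) + Complex.I * (ξ j ⬝ᵥ a.toAdd : ℝ)))
    (Complex.exp_ne_zero _)
  map_one' := by ext j; simp
  map_mul' a b := by
    ext j
    simp only [toAdd_mul, dotProduct_add, Complex.ofReal_add, Units.val_mul, Units.val_mk0,
      Pi.mul_apply, ← Complex.exp_add]
    ring_nf

section
variable {n k : ℕ} (ξ η : Fin n → Fin k → ℝ)

@[simp]
theorem coe_alphaDiag_apply (a : Fin k → ℝ) (j : Fin n) :
    (alphaDiag ξ η (.ofAdd a) j : ℂ) =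
      Complex.exp ((η j ⬝ᵥ a : ℝ) + Complex.I * (ξ j ⬝ᵥ a : ℝ)) :=
  rfl

theorem norm_alphaDiag_apply (a : Fin k → ℝ) (j : Fin n) :
    ‖(alphaDiag ξ η (.ofAdd a) j : ℂ)‖ = Real.exp (η j ⬝ᵥ a) := by
  simp [Complex.norm_exp]

theorem alphaDiag_of_mem_perpSet {a : Fin k → ℝ} (ha : a ∈ perpSet η) :
    Pi.map (fun _ => Units.val) (alphaDiag ξ η (.ofAdd a)) = psiMap ξ a := by
  ext j
  simp only [Pi.map_apply, coe_alphaDiag_apply, show η j ⬝ᵥ a = 0 from ha j, Complex.ofReal_zero,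
    zero_add]
  rfl

theorem dense_alphaDiag_range (hb : LinearIndependent ℝ η)
    (hc : torusSet n ⊆ closure (psiMap ξ '' perpSet η)) :
    Dense ((alphaDiag ξ η).range : Set (Fin n → ℂˣ)) := by
  set H := (alphaDiag ξ η).range
  intro u
  obtain ⟨b, hηb⟩ := LinearIndependent.mulVec_surjective (M := .of η) hb
    fun j => Real.log ‖(u j : ℂ)‖
  set t := (alphaDiag ξ η (.ofAdd b))⁻¹ * u
  have ht : Pi.map (fun _ => Units.val) t ∈ torusSet n := by
    intro j
    have hbj : η j ⬝ᵥ b = Real.log ‖(u j : ℂ)‖ := congrFun hηb j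
    simp only [Pi.map_apply, t, Pi.mul_apply, Pi.inv_apply, Units.val_mul, norm_mul,
      Units.val_inv_eq_inv_val, norm_inv, norm_alphaDiag_apply, hbj,
      Real.exp_log (norm_pos_iff.mpr (u j).ne_zero)]
    exact inv_mul_cancel₀ (norm_ne_zero_iff.mpr (u j).ne_zero)
  have hpsi : psiMap ξ '' perpSet η ⊆ Pi.map (fun _ => Units.val) '' H := by
    rintro _ ⟨a, ha, rfl⟩
    exact ⟨_, ⟨.ofAdd a, rfl⟩, alphaDiag_of_mem_perpSet ξ η ha⟩
  have ht_mem : t ∈ closure (H : Set (Fin n → ℂˣ)) := by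
    have hι : IsInducing (Pi.map fun _ : Fin n => (Units.val : ℂˣ → ℂ)) :=
      .piMap fun _ => Units.isEmbedding_val₀.isInducing
    rw [hι.closure_eq_preimage_closure_image]
    exact closure_mono hpsi (hc ht)
  have hu : u = alphaDiag ξ η (.ofAdd b) * t := by simp [t]
  rw [hu]
  exact H.topologicalClosure.mul_mem (H.le_topologicalClosure ⟨_, rfl⟩) ht_mem

theorem range_alphaDiag_ne_top (hc : psiMap ξ '' perpSet η ≠ torusSet n) :
    (alphaDiag ξ η).range ≠ ⊤ := by
  have hsub : psiMap ξ '' perpSet η ⊆ torusSet n := by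
    rintro _ ⟨a, -, rfl⟩ j
    simp [psiMap, Complex.norm_exp]
  obtain ⟨z, hz, hz_notMem⟩ := Set.exists_of_ssubset (hsub.ssubset_of_ne hc)
  have hz0 (j : Fin n) : z j ≠ 0 := norm_ne_zero_iff.mp (by rw [hz j]; exact one_ne_zero)
  intro htop
  obtain ⟨a, ha⟩ := htop ▸ Subgroup.mem_top fun j => Units.mk0 (z j) (hz0 j)
  have hval : Pi.map (fun _ => Units.val) (alphaDiag ξ η a) = z := by
    rw [ha]; rfl
  have hperp : a.toAdd ∈ perpSet η := fun j => by
    have := hz j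
    rw [← hval, Pi.map_apply, ← ofAdd_toAdd a, norm_alphaDiag_apply, Real.exp_eq_one_iff] at this
    exact this
  exact hz_notMem ⟨a.toAdd, hperp, by rw [← alphaDiag_of_mem_perpSet ξ η hperp, ofAdd_toAdd, hval]⟩

theorem alphaOrbit_eq_image (p : Fin n → ℂˣ) :
    alphaOrbit ξ η (Pi.map (fun _ => Units.val) p) =
      Pi.map (fun _ => Units.val) '' ((· * p) '' (alphaDiag ξ η).range) := by
  ext q
  constructor
  · rintro ⟨a, rfl⟩
    exact ⟨_, ⟨_, ⟨.ofAdd a, rfl⟩, rfl⟩, rfl⟩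
  · rintro ⟨_, ⟨_, ⟨a, rfl⟩, rfl⟩, rfl⟩
    exact ⟨a.toAdd, rfl⟩

end

theorem statement10_general (n k : ℕ) (ξ η : Fin n → Fin k → ℝ)
    (hb : LinearIndependent ℝ η)
    (hc₂ : torusSet n ⊆ closure (psiMap ξ '' perpSet η))
    (hc₃ : psiMap ξ '' perpSet η ≠ torusSet n)
    (p : Fin n → ℂ) (hp : ∀ j, p j ≠ 0) :
    Dense (alphaOrbit ξ η p) ∧ ¬ IsLocallyClosed (alphaOrbit ξ η p) := by
  let pu : Fin n → ℂˣ := fun j => Units.mk0 (p j) (hp j)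
  have hι : IsEmbedding (Pi.map fun _ : Fin n => (Units.val : ℂˣ → ℂ)) :=
    .piMap fun _ => Units.isEmbedding_val₀
  have hdense := dense_alphaDiag_range ξ η hb hc₂
  rw [show p = Pi.map (fun _ => Units.val) pu from rfl, alphaOrbit_eq_image]
  exact ⟨Subgroup.dense_image_coset hι.continuous (.piMap fun _ => Units.denseRange_val) hdense pu,
    Subgroup.not_isLocallyClosed_image_coset hι hdense (range_alphaDiag_ne_top ξ η hc₃) pu⟩

/-- Assume: (a) the `ξ_j` and `η_j` together span `ℝ^k`; (b) `η₁,…,η_n` are linearly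
independent; (c) `Ψ` is injective on `{η₁,…,η_n}^⊥` and its image is dense in, and
different from, the torus `𝕋ⁿ`.  Then for every `p ∈ (ℂ^×)ⁿ` the orbit `α(ℝ^k)p` is
dense in `ℂⁿ` and is not locally closed in `ℂⁿ`. -/
theorem statement10 (n k : ℕ) (hn : 0 < n) (hk : 0 < k) (ξ η : Fin n → Fin k → ℝ)
    (ha : Submodule.span ℝ (Set.range ξ ∪ Set.range η) = ⊤)
    (hb : LinearIndependent ℝ η)
    (hc₁ : Set.InjOn (psiMap ξ) (perpSet η))
    (hc₂ : torusSet n ⊆ closure (psiMap ξ '' perpSet η))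
    (hc₃ : psiMap ξ '' perpSet η ≠ torusSet n)
    (p : Fin n → ℂ) (hp : ∀ j, p j ≠ 0) :
    Dense (alphaOrbit ξ η p) ∧ ¬ IsLocallyClosed (alphaOrbit ξ η p) :=
  statement10_general n k ξ η hb hc₂ hc₃ p hp
end

section
/- If conditions (a), (b), (c) all hold, then n ≥ 2 and n + 1 ≤ k ≤ 2n − 1 (in particular k ≥ 3). -/
/-!
Write `K = {η_j}^⊥`, a subspace of dimension `d = k - n` by (b), and `Ψ = E ∘ Ξ` with
`Ξ a = (⟨ξ_j, a⟩)_j` linear and `E v = (e^{i v_j})_j` the exponential map of the torus.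
Injectivity of `Ψ` on `K` makes `Ξ` injective on `K`, so `d ≤ n`. If `d = n`, then `Ξ` maps `K`
onto `ℝⁿ` and `Ψ(K) = E(ℝⁿ) = 𝕋ⁿ`; if `d = 0`, then `Ψ(K)` is a point, which is closed and so
not dense in `𝕋ⁿ` (which has two points as soon as `n > d ≥ 0`). Hence `1 ≤ d ≤ n - 1`,
i.e. `n + 1 ≤ k ≤ 2n - 1`.
-/

open Module Set

theorem Matrix.finrank_ker_mulVecLin_add_card {K m n : Type*} [Field K] [Fintype m] [Fintype n]
    {A : Matrix m n K} (h : LinearIndependent K A.row) :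
    finrank K (LinearMap.ker A.mulVecLin) + Fintype.card m = Fintype.card n := by
  rw [← h.rank_matrix, Matrix.rank, add_comm, LinearMap.finrank_range_add_finrank_ker,
    finrank_fintype_fun_eq_card]

section InjOnComp

variable {K V W X : Type*} [Field K] [AddCommGroup V] [Module K V] [AddCommGroup W] [Module K W]
  {f : V →ₗ[K] W} {g : W → X} {p : Submodule K V}

theorem Submodule.injective_domRestrict_of_injOn_comp (h : InjOn (g ∘ f) p) :
    Function.Injective (f.domRestrict p) :=
  fun x y hxy => Subtype.ext (h x.2 y.2 (congrArg g hxy))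

theorem Submodule.finrank_le_of_injOn_comp [FiniteDimensional K W] (h : InjOn (g ∘ f) p) :
    finrank K p ≤ finrank K W :=
  LinearMap.finrank_le_finrank_of_injective (injective_domRestrict_of_injOn_comp h)

theorem Submodule.image_comp_eq_range_of_injOn_comp [FiniteDimensional K W] (h : InjOn (g ∘ f) p)
    (hp : finrank K p = finrank K W) : (g ∘ f) '' p = range g := by
  have hinj := injective_domRestrict_of_injOn_comp h
  have : FiniteDimensional K p := .of_injective _ hinj
  have hsurj := (LinearMap.injective_iff_surjective_of_finrank_eq_finrank hp).mp hinj
  have hfp : f '' p = univ := eq_univ_of_forall fun w => by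
    obtain ⟨x, hx⟩ := hsurj w
    exact ⟨x, x.2, hx⟩
  rw [image_comp, hfp, image_univ]

end InjOnComp

noncomputable def torusExp {n : ℕ} (v : Fin n → ℝ) : Fin n → ℂ :=
  fun j => Complex.exp (Complex.I * v j)

theorem psiMap_eq_torusExp_comp {n k : ℕ} (ξ : Fin n → Fin k → ℝ) :
    psiMap ξ = torusExp ∘ (Matrix.of ξ).mulVecLin :=
  rfl

theorem range_torusExp (n : ℕ) : range (torusExp (n := n)) = torusSet n := by
  ext z
  constructor
  · rintro ⟨v, rfl⟩ j
    simp [torusExp, Complex.norm_exp]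
  · intro hz
    refine ⟨fun j => (z j).arg, funext fun j => ?_⟩
    simpa [torusExp, hz j, mul_comm] using Complex.norm_mul_exp_arg_mul_I (z j)

theorem torusSet_nontrivial {n : ℕ} (hn : 0 < n) : (torusSet n).Nontrivial :=
  ⟨1, fun _ => by simp, -1, fun _ => by simp,
    fun h => by norm_num [funext_iff] at h; exact h ⟨0, hn⟩⟩

theorem perpSet_eq_ker {n k : ℕ} (η : Fin n → Fin k → ℝ) :
    perpSet η = LinearMap.ker (Matrix.of η).mulVecLin := by
  ext a
  simp only [perpSet, mem_ofPred_eq, SetLike.mem_coe, LinearMap.mem_ker, funext_iff]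
  rfl

theorem statement13_general (n k : ℕ) (ξ η : Fin n → Fin k → ℝ)
    (hb : LinearIndependent ℝ η)
    (hc₁ : Set.InjOn (psiMap ξ) (perpSet η))
    (hc₂ : torusSet n ⊆ closure (psiMap ξ '' perpSet η))
    (hc₃ : psiMap ξ '' perpSet η ≠ torusSet n) :
    2 ≤ n ∧ n + 1 ≤ k ∧ k ≤ 2 * n - 1 := by
  rw [perpSet_eq_ker, psiMap_eq_torusExp_comp] at hc₁ hc₂ hc₃
  set P := LinearMap.ker (Matrix.of η).mulVecLin
  have hdim : finrank ℝ P + n = k := by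
    simpa using Matrix.finrank_ker_mulVecLin_add_card (A := Matrix.of η) hb
  have hle : finrank ℝ P ≤ n := by
    simpa using Submodule.finrank_le_of_injOn_comp hc₁
  have hne : finrank ℝ P ≠ n := fun h => hc₃ <| by
    rw [Submodule.image_comp_eq_range_of_injOn_comp hc₁ (by simpa using h), range_torusExp]
  have hpos : finrank ℝ P ≠ 0 := fun h0 => by
    rw [Submodule.finrank_eq_zero.mp h0, Submodule.bot_coe, image_singleton,
      closure_singleton] at hc₂
    exact (torusSet_nontrivial (by omega)).not_subset_singleton hc₂
  omega

/-- If conditions (a), (b), (c) all hold, then `n ≥ 2` and `n + 1 ≤ k ≤ 2n − 1`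
(in particular `k ≥ 3`). -/
theorem statement13 (n k : ℕ) (hn : 0 < n) (hk : 0 < k) (ξ η : Fin n → Fin k → ℝ)
    (ha : Submodule.span ℝ (Set.range ξ ∪ Set.range η) = ⊤)
    (hb : LinearIndependent ℝ η)
    (hc₁ : Set.InjOn (psiMap ξ) (perpSet η))
    (hc₂ : torusSet n ⊆ closure (psiMap ξ '' perpSet η))
    (hc₃ : psiMap ξ '' perpSet η ≠ torusSet n) :
    2 ≤ n ∧ n + 1 ≤ k ∧ k ≤ 2 * n - 1 :=
  statement13_general n k ξ η hb hc₁ hc₂ hc₃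
end
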